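/- arXiv:1506.03262 — 5 statements merged into one kernel-verified Lean document; each statement's English description precedes it below -/
import Mathlib

section
/- Let S₂ be a subsequence of S₁ witnessed by a strictly increasing character-preserving map f. Fix a character x. Let B_x be the bitvector of length occ(x, S₁) whose i-th bit is 1 iff the position of the i-th occurrence of x in S₁ is not in the image of f. Then for every i with 1 ≤ i ≤ occ(x, S₂), select_x(S₁, select₀(B_x, i)) = f(select_x(S₂, i)); that is, the position in S₁ of the (select₀(B_x, i))-th occurrence of x equals the image under f of the position of the i-th occurrence of x in S₂. -/
namespace RS

variable {α : Type*} [DecidableEq α]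

/-- 1-indexed position of the `j`-th occurrence of `a` in `S` (junk value if out of range). -/
def sel (a : α) (S : List α) (j : ℕ) : ℕ :=
  (((List.range S.length).filter (fun p => decide (S[p]? = some a))).getD (j - 1) 0) + 1

/-- Number of occurrences of `a` among the first `i` characters of `S` (1-indexed). -/
def rank (a : α) (S : List α) (i : ℕ) : ℕ := (S.take i).count a

/-- Total number of occurrences of `a` in `S`. -/
def occ (a : α) (S : List α) : ℕ := S.count a

def rank0 (B : List Bool) (i : ℕ) : ℕ := (B.take i).count false
def rank1 (B : List Bool) (i : ℕ) : ℕ := (B.take i).count true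
def sel0 (B : List Bool) (i : ℕ) : ℕ := sel false B i
def sel1 (B : List Bool) (i : ℕ) : ℕ := sel true B i

/-- `f` is a strictly increasing, character-preserving embedding of `S₂` into `S₁`
(all positions 1-indexed). -/
def Emb (S₂ S₁ : List α) (f : ℕ → ℕ) : Prop :=
  (∀ j, 1 ≤ j → j ≤ S₂.length → 1 ≤ f j ∧ f j ≤ S₁.length) ∧
  (∀ j k, 1 ≤ j → j < k → k ≤ S₂.length → f j < f k) ∧
  (∀ j, 1 ≤ j → j ≤ S₂.length → S₂[j - 1]? = S₁[f j - 1]?)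

/-- Is the 1-indexed position `p` in the image `{f 1, …, f m}`? -/
def inIm (m : ℕ) (f : ℕ → ℕ) (p : ℕ) : Bool :=
  (List.range m).any (fun j => f (j + 1) == p)

/-- Bitvector of length `n` marking with `true` (`1`) the 1-indexed positions
outside the image `{f 1, …, f m}`. -/
def markB (n m : ℕ) (f : ℕ → ℕ) : List Bool :=
  (List.range n).map (fun p => !inIm m f (p + 1))

/-- Bitvector of length `occ x S` whose `i`-th bit is `true` (`1`) iff the position
of the `i`-th occurrence of `x` in `S` is outside the image `{f 1, …, f m}`. -/
def markBx (x : α) (S : List α) (m : ℕ) (f : ℕ → ℕ) : List Bool :=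
  (List.range (occ x S)).map (fun i => !inIm m f (sel x S (i + 1)))

/-- The subsequence of `S` consisting of the characters at positions outside
the image `{g 1, …, g m}`, in order. -/
def delIm (S : List α) (m : ℕ) (g : ℕ → ℕ) : List α :=
  (List.range S.length).filterMap (fun p => if inIm m g (p + 1) then none else S[p]?)

/-!
The occurrences of `x` in `S₁` that lie in the image of `f` are exactly the images of the
occurrences of `x` in `S₂`, and since `f` is increasing they appear in the same order. The
`0`-bits of `B_x` mark precisely these occurrences, so the `i`-th `0`-bit of `B_x` points to the
occurrence of `x` in `S₁` at position `f(select_x(S₂, i))`. Occurrence lists are handled as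
`List.findIdxs`, whose `i`-th entry is the `0`-indexed `select`.
-/

theorem getElem?_eq_some_iff_mem_findIdxs {a : α} {S : List α} {p : ℕ} :
    S[p]? = some a ↔ p ∈ S.findIdxs (· == a) := by
  simp [List.getElem?_eq_some_iff]

theorem sel_eq_getD_findIdxs (a : α) (S : List α) (j : ℕ) :
    sel a S j = (S.findIdxs (· == a)).getD (j - 1) 0 + 1 := by
  have h : (List.range S.length).filter (fun p => decide (S[p]? = some a)) =
      S.findIdxs (· == a) := by
    refine (List.pairwise_lt_range.filter _).eq_of_mem_iff List.pairwise_findIdxs fun p => ?_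
    rw [← getElem?_eq_some_iff_mem_findIdxs, List.mem_filter, List.mem_range,
      decide_eq_true_iff, and_iff_right_iff_imp]
    exact fun hp => (List.getElem?_eq_some_iff.1 hp).1
  rw [sel, h]

theorem sel_add_one_eq_getElem {a : α} {S : List α} {j : ℕ}
    (hj : j < (S.findIdxs (· == a)).length) :
    sel a S (j + 1) = (S.findIdxs (· == a))[j] + 1 := by
  rw [sel_eq_getD_findIdxs, Nat.add_sub_cancel, List.getD_eq_getElem _ _ hj]

theorem length_findIdxs_beq (a : α) (S : List α) :
    (S.findIdxs (· == a)).length = occ a S := by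
  rw [List.length_findIdxs, occ, List.count]

theorem inIm_iff {m : ℕ} {f : ℕ → ℕ} {p : ℕ} :
    inIm m f p = true ↔ ∃ j < m, f (j + 1) = p := by
  simp [inIm, List.any_eq_true, List.mem_range]

theorem markBx_eq_map (x : α) (S : List α) (m : ℕ) (f : ℕ → ℕ) :
    markBx x S m f = (S.findIdxs (· == x)).map (fun p => !inIm m f (p + 1)) := by
  have hlen : (markBx x S m f).length = (S.findIdxs (· == x)).length := by
    rw [markBx, List.length_map, List.length_range, length_findIdxs_beq]
  refine List.ext_getElem (by rw [hlen, List.length_map]) fun k hk _ => ?_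
  simp [markBx, sel_add_one_eq_getElem (hlen ▸ hk)]

section Emb

variable {β : Type*} {S₁ S₂ : List β} {f : ℕ → ℕ} {j k : ℕ}

theorem Emb.one_le (hf : Emb S₂ S₁ f) (hj : j < S₂.length) : 1 ≤ f (j + 1) :=
  (hf.1 (j + 1) (by omega) hj).1

theorem Emb.lt (hf : Emb S₂ S₁ f) (hjk : j < k) (hk : k < S₂.length) : f (j + 1) < f (k + 1) :=
  hf.2.1 (j + 1) (k + 1) (by omega) (by omega) hk

theorem Emb.getElem?_eq (hf : Emb S₂ S₁ f) (hj : j < S₂.length) :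
    S₂[j]? = S₁[f (j + 1) - 1]? :=
  hf.2.2 (j + 1) (by omega) hj

theorem Emb.filter_findIdxs_inIm [DecidableEq β] (hf : Emb S₂ S₁ f) (x : β) :
    (S₁.findIdxs (· == x)).filter (fun p => inIm S₂.length f (p + 1)) =
      (S₂.findIdxs (· == x)).map (fun j => f (j + 1) - 1) := by
  have hsorted : ((S₂.findIdxs (· == x)).map (fun j => f (j + 1) - 1)).Pairwise (· < ·) := by
    refine List.pairwise_map.2 (List.pairwise_findIdxs.imp_of_mem fun {j k} _ hk hjk => ?_)
    have hk : k < S₂.length := (List.mem_findIdxs_iff_exists_getElem_pos.1 hk).fst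
    have := hf.one_le (hjk.trans hk)
    have := hf.lt hjk hk
    omega
  refine (List.pairwise_findIdxs.filter _).eq_of_mem_iff hsorted fun p => ?_
  simp only [List.mem_filter, List.mem_map, inIm_iff, ← getElem?_eq_some_iff_mem_findIdxs]
  constructor
  · rintro ⟨hpx, j, hj, hfj⟩
    refine ⟨j, ?_, by omega⟩
    rwa [hf.getElem?_eq hj, hfj, Nat.add_sub_cancel]
  · rintro ⟨j, hjx, rfl⟩
    have hj : j < S₂.length := (List.getElem?_eq_some_iff.1 hjx).1
    have := hf.one_le hj
    exact ⟨hf.getElem?_eq hj ▸ hjx, j, hj, by omega⟩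

end Emb

theorem findIdxs_false_markBx (x : α) (S : List α) (m : ℕ) (f : ℕ → ℕ) :
    (markBx x S m f).findIdxs (· == false) =
      (S.findIdxs (· == x)).findIdxs (fun p => inIm m f (p + 1)) := by
  rw [markBx_eq_map, List.findIdxs_map]
  congr 1
  funext p
  simp

theorem sel_markBx_of_emb (S₁ S₂ : List α) (f : ℕ → ℕ) (hf : Emb S₂ S₁ f)
    (x : α) (i : ℕ) (hi1 : 1 ≤ i) (hi2 : i ≤ occ x S₂) :
    sel x S₁ (sel0 (markBx x S₁ S₂.length f) i) = f (sel x S₂ i) := by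
  obtain ⟨k, rfl⟩ : ∃ k, i = k + 1 := ⟨i - 1, by omega⟩
  have hfilter := hf.filter_findIdxs_inIm x
  have hk₂ : k < (S₂.findIdxs (· == x)).length := by rw [length_findIdxs_beq]; omega
  have hk : k < ((S₁.findIdxs (· == x)).filter (fun p => inIm S₂.length f (p + 1))).length := by
    rwa [hfilter, List.length_map]
  have hkB : k < ((markBx x S₁ S₂.length f).findIdxs (· == false)).length := by
    rwa [findIdxs_false_markBx, List.length_findIdxs, List.countP_eq_length_filter]
  calc sel x S₁ (sel0 (markBx x S₁ S₂.length f) (k + 1))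
      = ((S₁.findIdxs (· == x)).filter (fun p => inIm S₂.length f (p + 1)))[k] + 1 := by
        rw [sel0, sel_add_one_eq_getElem hkB, List.getElem_filter_eq_getElem_getElem_findIdxs hk,
          sel_add_one_eq_getElem]
        · simp only [findIdxs_false_markBx]
        · grind [findIdxs_false_markBx]
    _ = f (sel x S₂ (k + 1)) := by
        have := hf.one_le
          (List.mem_findIdxs_iff_exists_getElem_pos.1 (List.getElem_mem hk₂)).fst
        simp only [hfilter, List.getElem_map, sel_add_one_eq_getElem hk₂]
        omega

end RS
end

section
/- (Relative select for supersequences, common-character case.) Let S₁ be a subsequence of S₂ witnessed by a strictly increasing character-preserving map g : {1,…,|S₁|} → {1,…,|S₂|}. Define B of length |S₂| by B[p] = 1 iff p ∉ im(g), and for each character x define B_x of length occ(x, S₂) by B_x[i] = 1 iff the position of the i-th occurrence of x in S₂ is not in im(g). Then for every character x and every i with 1 ≤ i ≤ occ(x, S₂) such that B_x[i] = 0: select_x(S₂, i) = select₀(B, select_x(S₁, rank₀(B_x, i))). -/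
namespace RS

variable {α : Type*} [DecidableEq α]

/-! The zeros of `B` are the image of `g` listed in increasing order, so the `j`-th zero of `B`
is at `g j`. Since `g` is increasing and preserves characters, the occurrences of `x` in `S₂`
that lie in the image of `g` are exactly the images of the occurrences of `x` in `S₁`, in the
same order. If the `i`-th occurrence of `x` in `S₂` is in the image, it is the `c`-th such
occurrence with `c = rank₀(B_x, i)`, hence the image of the `c`-th occurrence of `x` in `S₁`. -/

lemma getElem?_filter_countP_take {β : Type*} (q : β → Bool) :
    ∀ (l : List β) (k : ℕ) (hk : k < l.length), q l[k] →
      (l.filter q)[(l.take k).countP q]? = some l[k]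
  | b :: l, 0, _, hq => by simp_all
  | b :: l, k + 1, hk, hq => by
    have ih := getElem?_filter_countP_take q l k (by simpa using hk) (by simpa using hq)
    by_cases hb : q b <;> simp [hb, ih]

lemma rank0_map {β : Type*} (f : β → Bool) (l : List β) (k : ℕ) :
    rank0 (l.map f) k = (l.take k).countP (fun b => !f b) := by
  rw [rank0, ← List.map_take, List.count_eq_countP, List.countP_map]
  congr 1
  funext b
  cases h : f b <;> simp [h]

def positions (a : α) (S : List α) : List ℕ :=
  (List.range S.length).filter (fun p => decide (S[p]? = some a))

lemma sel_eq_getD_positions (a : α) (S : List α) (j : ℕ) :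
    sel a S j = (positions a S).getD (j - 1) 0 + 1 := rfl

lemma one_le_sel (a : α) (S : List α) (j : ℕ) : 1 ≤ sel a S j := Nat.le_add_left 1 _

lemma sel_succ_of_getElem?_positions {a : α} {S : List α} {j p : ℕ}
    (h : (positions a S)[j]? = some p) : sel a S (j + 1) = p + 1 := by
  rw [sel_eq_getD_positions, Nat.add_sub_cancel, List.getD_eq_getElem?_getD, h, Option.getD_some]

lemma mem_positions {a : α} {S : List α} {p : ℕ} :
    p ∈ positions a S ↔ p < S.length ∧ S[p]? = some a := by
  simp [positions]

lemma sortedLT_positions (a : α) (S : List α) : (positions a S).SortedLT :=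
  (List.pairwise_lt_range.filter _).sortedLT

lemma length_positions (a : α) (S : List α) : (positions a S).length = occ a S := by
  induction S with
  | nil => rfl
  | cons b S ih =>
    rw [positions, occ] at *
    rw [List.length_cons, List.range_succ_eq_map, List.filter_cons, List.filter_map]
    simp only [Function.comp_def, List.getElem?_cons_succ, List.getElem?_cons_zero]
    split <;> simp_all

lemma markBx_eq_map_positions (x : α) (S : List α) (m : ℕ) (f : ℕ → ℕ) :
    markBx x S m f = (positions x S).map (fun p => !inIm m f (p + 1)) := by
  apply List.ext_getElem
  · simp [markBx, length_positions]
  · intro k _ hk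
    simp only [List.length_map] at hk
    simp [markBx, sel_eq_getD_positions, List.getElem?_eq_getElem hk]

lemma mem_positions_false_markB {n m : ℕ} {g : ℕ → ℕ} {p : ℕ} :
    p ∈ positions false (markB n m g) ↔ p < n ∧ inIm m g (p + 1) := by
  simp only [mem_positions, markB, List.length_map, List.length_range, List.getElem?_map]
  constructor <;> rintro ⟨hp, h⟩ <;> simp_all

def emb0 (g : ℕ → ℕ) (j : ℕ) : ℕ := g (j + 1) - 1

section Embedding

variable {n m : ℕ} {g : ℕ → ℕ}
  (hbound : ∀ j, 1 ≤ j → j ≤ m → 1 ≤ g j ∧ g j ≤ n)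
  (hmono : ∀ j k, 1 ≤ j → j < k → k ≤ m → g j < g k)
include hbound hmono

lemma sortedLT_map_emb0 {l : List ℕ} (hl : l.SortedLT) (hlt : ∀ j ∈ l, j < m) :
    (l.map (emb0 g)).SortedLT := by
  refine (List.pairwise_map.mpr (hl.pairwise.imp_of_mem ?_)).sortedLT
  intro a b ha hb hab
  have := hbound (a + 1) (by omega) (hlt a ha)
  have := hmono (a + 1) (b + 1) (by omega) (by omega) (hlt b hb)
  simp only [emb0]
  omega

lemma positions_false_markB : positions false (markB n m g) = (List.range m).map (emb0 g) := by
  refine (sortedLT_positions _ _).eq_of_mem_iff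
    (sortedLT_map_emb0 hbound hmono (List.sortedLT_range m) fun _ => List.mem_range.mp) ?_
  intro p
  simp only [mem_positions_false_markB, inIm, List.any_eq_true, List.mem_range, beq_iff_eq,
    List.mem_map, emb0]
  constructor
  · rintro ⟨-, j, hj, hgj⟩
    exact ⟨j, hj, by omega⟩
  · rintro ⟨j, hj, rfl⟩
    have := hbound (j + 1) (by omega) (by omega)
    exact ⟨by omega, j, hj, by omega⟩

lemma sel0_markB {j : ℕ} (hj1 : 1 ≤ j) (hjm : j ≤ m) : sel0 (markB n m g) j = g j := by
  obtain ⟨q, rfl⟩ : ∃ q, j = q + 1 := ⟨j - 1, by omega⟩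
  have := hbound (q + 1) hj1 hjm
  rw [sel0, sel_succ_of_getElem?_positions (p := emb0 g q)]
  · simp only [emb0]
    omega
  · rw [positions_false_markB hbound hmono, List.getElem?_map, List.getElem?_range (by omega)]
    rfl

end Embedding

lemma map_emb0_positions {S₁ S₂ : List α} {g : ℕ → ℕ} (hg : Emb S₁ S₂ g) (x : α) :
    (positions x S₁).map (emb0 g)
      = (positions x S₂).filter (fun p => inIm S₁.length g (p + 1)) := by
  obtain ⟨hbound, hmono, hchar⟩ := hg
  refine (sortedLT_map_emb0 hbound hmono (sortedLT_positions x S₁)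
    fun _ hj => (mem_positions.mp hj).1).eq_of_mem_iff
    ((sortedLT_positions x S₂).pairwise.filter _).sortedLT ?_
  intro p
  simp only [List.mem_map, List.mem_filter, mem_positions, emb0, inIm, List.any_eq_true,
    List.mem_range, beq_iff_eq]
  constructor
  · rintro ⟨q, ⟨hq, hxq⟩, rfl⟩
    have := hbound (q + 1) (by omega) (by omega)
    have hc := hchar (q + 1) (by omega) (by omega)
    rw [Nat.add_sub_cancel] at hc
    exact ⟨⟨by omega, hc ▸ hxq⟩, q, hq, by omega⟩
  · rintro ⟨⟨hp, hxp⟩, j, hj, hgj⟩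
    have hc := hchar (j + 1) (by omega) (by omega)
    rw [Nat.add_sub_cancel, hgj] at hc
    exact ⟨j, ⟨hj, hc.trans hxp⟩, by omega⟩

lemma sel_rank0_markBx {S₁ S₂ : List α} {g : ℕ → ℕ} (hg : Emb S₁ S₂ g) {x : α} {k : ℕ}
    (hbit : (markBx x S₂ S₁.length g)[k]? = some false) :
    sel x S₁ (rank0 (markBx x S₂ S₁.length g) (k + 1)) ≤ S₁.length ∧
      g (sel x S₁ (rank0 (markBx x S₂ S₁.length g) (k + 1))) = sel x S₂ (k + 1) := by
  set L := positions x S₂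
  set inImage : ℕ → Bool := fun p => inIm S₁.length g (p + 1)
  rw [markBx_eq_map_positions] at hbit ⊢
  obtain ⟨hk, hLk⟩ : ∃ hk : k < L.length, inImage L[k] := by
    simpa [List.getElem?_eq_some_iff] using hbit
  have hrank : rank0 (L.map fun p => !inImage p) (k + 1) = (L.take k).countP inImage + 1 := by
    rw [rank0_map, List.take_add_one, List.countP_append, List.getElem?_eq_getElem hk]
    simp [hLk]
  have hfilter := getElem?_filter_countP_take inImage L k hk hLk
  rw [← map_emb0_positions hg, List.getElem?_map] at hfilter
  obtain ⟨q, hq, hgq⟩ := Option.map_eq_some_iff.mp hfilter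
  have hqm : q < S₁.length := (mem_positions.mp (List.mem_of_getElem? hq)).1
  have := hg.1 (q + 1) (by omega) (by omega)
  rw [hrank, sel_succ_of_getElem?_positions hq,
    sel_succ_of_getElem?_positions (List.getElem?_eq_getElem hk)]
  simp only [emb0] at hgq
  exact ⟨by omega, by omega⟩

theorem relative_select_supersequence_common_general (S₁ S₂ : List α) (g : ℕ → ℕ)
    (hg : Emb S₁ S₂ g) (x : α) (i : ℕ) (hi1 : 1 ≤ i)
    (hbit : (markBx x S₂ S₁.length g)[i - 1]? = some false) :
    sel x S₂ i =
      sel0 (markB S₂.length S₁.length g)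
        (sel x S₁ (rank0 (markBx x S₂ S₁.length g) i)) := by
  obtain ⟨k, rfl⟩ : ∃ k, i = k + 1 := ⟨i - 1, by omega⟩
  obtain ⟨hle, hsel⟩ := sel_rank0_markBx hg (k := k) hbit
  rw [sel0_markB hg.1 hg.2.1 (one_le_sel x S₁ _) hle, hsel]

theorem relative_select_supersequence_common (S₁ S₂ : List α) (g : ℕ → ℕ)
    (hg : Emb S₁ S₂ g) (x : α) (i : ℕ) (hi1 : 1 ≤ i) (hi2 : i ≤ occ x S₂)
    (hbit : (markBx x S₂ S₁.length g)[i - 1]? = some false) :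
    sel x S₂ i =
      sel0 (markB S₂.length S₁.length g)
        (sel x S₁ (rank0 (markBx x S₂ S₁.length g) i)) :=
  relative_select_supersequence_common_general S₁ S₂ g hg x i hi1 hbit

end RS
end

section
/- Let f be a strictly increasing character-preserving embedding of S₂ into S₁, and let B be the bitvector of length |S₁| with B[i] = 1 iff i ∉ im(f). Then for every character a and every position j of S₂: rank_a(S₂, j) ≤ rank_a(S₁, f(j)), and moreover rank_a(S₁, f(j)) − rank_a(S₂, j) equals the number of occurrences of a among the positions i ≤ f(j) with B[i] = 1. -/
namespace RS

variable {α : Type*} [DecidableEq α]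

/-! Among the positions `p < f j` of `S₁`, those in the image of `f` are, by strict monotonicity,
exactly `f 1, …, f j`, and they carry the characters of `S₂[1..j]`; the remaining ones are the
positions marked in `B`. Counting the occurrences of `a` in both parts gives the identity. -/

open Finset

lemma countP_range_eq_card_filter (P : ℕ → Bool) (n : ℕ) :
    (List.range n).countP P = #{p ∈ range n | P p} := by
  simp [Finset.card, Finset.filter_val, Finset.range_val, Multiset.range,
    List.countP_eq_length_filter]

lemma rank_eq_card_filter (a : α) (S : List α) (i : ℕ) :
    rank a S i = #{p ∈ range i | S[p]? = some a} := by
  induction i with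
  | zero => simp [rank]
  | succ i ih =>
    rw [rank, List.take_add_one, List.count_append, ← rank, ih, range_add_one,
      filter_insert]
    rcases h : S[i]? with _ | b
    · simp
    · by_cases hb : b = a <;> simp [hb]

lemma inIm_eq_true_iff {m : ℕ} {f : ℕ → ℕ} {p : ℕ} :
    inIm m f p = true ↔ ∃ k, 1 ≤ k ∧ k ≤ m ∧ f k = p := by
  simp only [inIm, List.any_eq_true, List.mem_range, beq_iff_eq]
  constructor
  · rintro ⟨k, hk, rfl⟩
    exact ⟨k + 1, by omega, hk, rfl⟩
  · rintro ⟨k, hk1, hkm, rfl⟩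
    exact ⟨k - 1, by omega, by rw [Nat.sub_add_cancel hk1]⟩

lemma getElem?_markB_eq_some_true_iff {n m : ℕ} {f : ℕ → ℕ} {p : ℕ} (hp : p < n) :
    (markB n m f)[p]? = some true ↔ inIm m f (p + 1) = false := by
  simp [markB, hp]

namespace Emb

variable {S₁ S₂ : List α} {f : ℕ → ℕ}

omit [DecidableEq α] in
lemma le_iff_le (hf : Emb S₂ S₁ f) {k l : ℕ} (hk1 : 1 ≤ k) (hkm : k ≤ S₂.length) (hl1 : 1 ≤ l)
    (hlm : l ≤ S₂.length) : f k ≤ f l ↔ k ≤ l :=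
  StrictMonoOn.le_iff_le (s := Set.Icc 1 S₂.length) (fun _ hk _ hl hkl => hf.2.1 _ _ hk.1 hkl hl.2)
    ⟨hk1, hkm⟩ ⟨hl1, hlm⟩

lemma card_filter_inIm_eq_rank (hf : Emb S₂ S₁ f) (a : α) {j : ℕ} (hj1 : 1 ≤ j)
    (hj2 : j ≤ S₂.length) :
    #{p ∈ range (f j) | S₁[p]? = some a ∧ inIm S₂.length f (p + 1) = true} = rank a S₂ j := by
  have hpos : ∀ k < S₂.length, 1 ≤ f (k + 1) := fun k hk => (hf.1 (k + 1) (by omega) hk).1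
  have hchar : ∀ k < S₂.length, S₁[f (k + 1) - 1]? = S₂[k]? := fun k hk =>
    (hf.2.2 (k + 1) (by omega) hk).symm
  rw [rank_eq_card_filter]
  symm
  refine card_nbij (fun k => f (k + 1) - 1) ?_ ?_ ?_
  · intro k hk
    dsimp only
    rw [mem_coe, mem_filter, mem_range] at hk ⊢
    have := hpos k (by omega)
    have := (hf.le_iff_le (k := k + 1) (by omega) (by omega) hj1 hj2).2 hk.1
    exact ⟨by omega, hk.2 ▸ hchar k (by omega),
      inIm_eq_true_iff.2 ⟨k + 1, by omega, by omega, by omega⟩⟩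
  · intro k hk l hl hkl
    rw [mem_coe, mem_filter, mem_range] at hk hl
    have := hpos k (by omega)
    have := hpos l (by omega)
    have := hf.le_iff_le (k := k + 1) (l := l + 1) (by omega) (by omega) (by omega) (by omega)
    have := hf.le_iff_le (k := l + 1) (l := k + 1) (by omega) (by omega) (by omega) (by omega)
    simp only at hkl
    omega
  · intro p hp
    rw [mem_coe, mem_filter, mem_range] at hp
    obtain ⟨hp, hpa, hpim⟩ := hp
    obtain ⟨k, hk1, hkm, hfk⟩ := inIm_eq_true_iff.1 hpim
    have hkj := (hf.le_iff_le hk1 hkm hj1 hj2).1 (by omega)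
    refine ⟨k - 1, ?_, by simp only [Nat.sub_add_cancel hk1]; omega⟩
    rw [mem_coe, mem_filter, mem_range, ← hpa, ← hchar (k - 1) (by omega), Nat.sub_add_cancel hk1,
      hfk, Nat.add_sub_cancel]
    exact ⟨by omega, rfl⟩

end Emb

theorem rank_le_of_emb (S₁ S₂ : List α) (f : ℕ → ℕ) (hf : Emb S₂ S₁ f)
    (a : α) (j : ℕ) (hj1 : 1 ≤ j) (hj2 : j ≤ S₂.length) :
    rank a S₂ j ≤ rank a S₁ (f j) ∧
    rank a S₁ (f j) - rank a S₂ j =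
      (List.range (f j)).countP
        (fun p => decide ((markB S₁.length S₂.length f)[p]? = some true ∧
          S₁[p]? = some a)) := by
  have hfj : f j ≤ S₁.length := (hf.1 j hj1 hj2).2
  have hunmarked : #{p ∈ range (f j) | S₁[p]? = some a ∧ ¬inIm S₂.length f (p + 1) = true} =
      (List.range (f j)).countP
        (fun p => decide ((markB S₁.length S₂.length f)[p]? = some true ∧ S₁[p]? = some a)) := by
    rw [countP_range_eq_card_filter]
    refine congrArg card (filter_congr fun p hp => ?_)
    rw [mem_range] at hp
    simp [getElem?_markB_eq_some_true_iff (hp.trans_le hfj), and_comm]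
  have hsplit : rank a S₁ (f j) = rank a S₂ j + (List.range (f j)).countP
      (fun p => decide ((markB S₁.length S₂.length f)[p]? = some true ∧ S₁[p]? = some a)) := by
    rw [← hf.card_filter_inIm_eq_rank a hj1 hj2, ← hunmarked, ← filter_filter, ← filter_filter,
      card_filter_add_card_filter_not, rank_eq_card_filter]
  omega

end RS
end

section
/- For any string S over a finite alphabet, the function LF defined by LF(i) = C[S[i]] + rank_{S[i]}(S, i), where C[c] is the number of positions j of S with S[j] < c (for a fixed total order on the alphabet), is a bijection (permutation) of {1, …, |S|}. -/
namespace RS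

variable {α : Type*} [DecidableEq α]

/-!
The value `lf S (k + 1)` of a position holding the character `c` lies in the block
`(#{y < c}, #{y ≤ c}]`. Blocks of distinct characters are disjoint and ordered like the
characters, and inside the block of `c` the rank grows strictly with the position. Hence
`lf` is injective on `[1, n]` and maps it into itself, so it permutes this finite set.
-/

theorem rank_mono (a : α) (S : List α) : Monotone (rank a S) := fun _ _ h =>
  ((List.take_prefix_take_left h).sublist).count_le a

theorem rank_le_count (a : α) (S : List α) (i : ℕ) : rank a S i ≤ S.count a :=
  (List.take_sublist _ _).count_le a

theorem rank_getElem_succ (S : List α) {k : ℕ} (hk : k < S.length) :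
    rank S[k] S (k + 1) = rank S[k] S k + 1 := by
  rw [rank, rank, List.take_add_one, List.getElem?_eq_getElem hk, Option.toList_some,
    List.count_append, List.count_singleton_self]

section LF

variable {β : Type*} [LinearOrder β]

theorem countP_lt_add_count (S : List β) (c : β) :
    S.countP (· < c) + S.count c = S.countP (· ≤ c) := by
  induction S with
  | nil => rfl
  | cons a t ih =>
    simp only [List.countP_cons, List.count_cons]
    rcases lt_trichotomy a c with h | rfl | h
    · simp [h, h.le, h.ne]; omega
    · simp; omega
    · simp [h.not_gt, h.not_ge, h.ne']; omega

variable [Inhabited β]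

def lf (S : List β) (i : ℕ) : ℕ :=
  S.countP (fun y => decide (y < S.getD (i - 1) default)) + rank (S.getD (i - 1) default) S i

theorem lf_succ (S : List β) {k : ℕ} (hk : k < S.length) :
    lf S (k + 1) = S.countP (· < S[k]) + rank S[k] S (k + 1) := by
  rw [lf, Nat.add_sub_cancel, List.getD_eq_getElem _ _ hk]

theorem countP_lt_lt_lf (S : List β) {k : ℕ} (hk : k < S.length) :
    S.countP (· < S[k]) < lf S (k + 1) := by
  rw [lf_succ S hk, rank_getElem_succ S hk]
  omega

theorem lf_le_countP_le (S : List β) {k : ℕ} (hk : k < S.length) :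
    lf S (k + 1) ≤ S.countP (· ≤ S[k]) := by
  rw [lf_succ S hk, ← countP_lt_add_count]
  exact Nat.add_le_add_left (rank_le_count _ _ _) _

theorem lf_lt_lf_of_getElem_lt (S : List β) {k l : ℕ} (hk : k < S.length) (hl : l < S.length)
    (h : S[k] < S[l]) : lf S (k + 1) < lf S (l + 1) :=
  calc lf S (k + 1) ≤ S.countP (· ≤ S[k]) := lf_le_countP_le S hk
    _ ≤ S.countP (· < S[l]) :=
      List.countP_mono_left fun x _ hx => by simpa using (of_decide_eq_true hx).trans_lt h
    _ < lf S (l + 1) := countP_lt_lt_lf S hl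

theorem lf_lt_lf_of_getElem_eq (S : List β) {k l : ℕ} (hl : l < S.length) (hkl : k < l)
    (h : S[k] = S[l]) : lf S (k + 1) < lf S (l + 1) := by
  rw [lf_succ S (hkl.trans hl), lf_succ S hl, h, rank_getElem_succ S hl]
  have : rank S[l] S (k + 1) ≤ rank S[l] S l := rank_mono _ _ hkl
  omega

theorem lf_mapsTo (S : List β) :
    Set.MapsTo (lf S) (Set.Icc 1 S.length) (Set.Icc 1 S.length) := by
  rintro (_ | k) ⟨hk1, hkn⟩
  · omega
  · have hk : k < S.length := hkn
    have := lf_le_countP_le S hk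
    have := S.countP_le_length (p := (· ≤ S[k]))
    exact ⟨(Nat.zero_le _).trans_lt (countP_lt_lt_lf S hk), by omega⟩

theorem lf_injOn (S : List β) : Set.InjOn (lf S) (Set.Icc 1 S.length) := by
  rintro (_ | k) ⟨hk1, hk⟩ (_ | l) ⟨hl1, hl⟩ heq
  all_goals try omega
  rcases lt_trichotomy S[k] S[l] with h | h | h
  · exact absurd heq (lf_lt_lf_of_getElem_lt S _ _ h).ne
  · rcases lt_trichotomy k l with hkl | rfl | hkl
    · exact absurd heq (lf_lt_lf_of_getElem_eq S _ hkl h).ne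
    · rfl
    · exact absurd heq (lf_lt_lf_of_getElem_eq S _ hkl h.symm).ne'
  · exact absurd heq (lf_lt_lf_of_getElem_lt S _ _ h).ne'

end LF

theorem lf_bijOn {β : Type*} [LinearOrder β] [Inhabited β] (S : List β) :
    Set.BijOn
      (fun i : ℕ =>
        S.countP (fun y => decide (y < S.getD (i - 1) default)) +
          rank (S.getD (i - 1) default) S i)
      (Set.Icc 1 S.length) (Set.Icc 1 S.length) :=
  (Set.Finite.injOn_iff_bijOn_of_mapsTo (Set.finite_Icc _ _) (lf_mapsTo S)).mp (lf_injOn S)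

end RS
end

section
/- For any string S of length n over a finite totally ordered alphabet, the function Ψ defined on {1, …, n} by Ψ(i) = select_c(S, i − C[c]), where c is the unique character with C[c] < i ≤ C[c] + occ(c, S), is the inverse of the LF mapping LF(i) = C[S[i]] + rank_{S[i]}(S, i); i.e., Ψ(LF(i)) = i and LF(Ψ(i)) = i for all 1 ≤ i ≤ n. -/
/-!
If `p₁ < ⋯ < pₘ` are the positions of a character `c` in `S`, then `select_c j = p_j` and
`rank_c p_j = j`, so rank and select are mutually inverse on these positions; `Ψ` and `LF`
only subtract and add the offset `C[c]`. For `Ψ (LF i) = i` one also needs that the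
character chosen by `Ψ` at `LF i` is `S[i]`: this holds because the blocks
`(C[c], C[c] + occ c]` of distinct characters are disjoint.
-/

namespace RS

variable {α : Type*} [DecidableEq α]

def occPositions (c : α) (S : List α) : List ℕ :=
  (List.range S.length).filter (fun p => decide (S[p]? = some c))

lemma sel_eq_getD_occPositions (c : α) (S : List α) (j : ℕ) :
    sel c S j = (occPositions c S).getD (j - 1) 0 + 1 := rfl

lemma pairwise_lt_occPositions (c : α) (S : List α) :
    (occPositions c S).Pairwise (· < ·) :=
  List.pairwise_lt_range.filter _

lemma mem_occPositions {c : α} {S : List α} {p : ℕ} :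
    p ∈ occPositions c S ↔ S[p]? = some c := by
  simp only [occPositions, List.mem_filter, List.mem_range, decide_eq_true_eq,
    and_iff_right_iff_imp]
  exact fun h => (List.getElem?_eq_some_iff.1 h).1

lemma rank_eq_countP_occPositions (c : α) (S : List α) (i : ℕ) :
    rank c S i = (occPositions c S).countP (fun p => decide (p < i)) := by
  induction S generalizing i with
  | nil => simp [rank, occPositions]
  | cons a T ih =>
    cases i with
    | zero => simp [rank]
    | succ i =>
      simp only [rank, occPositions, List.length_cons, List.range_succ_eq_map,
        List.take_succ_cons, List.count_cons, List.filter_cons, List.filter_map] at ih ⊢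
      rw [ih]
      by_cases h : a = c <;> simp [h, Function.comp_def]

lemma length_occPositions (c : α) (S : List α) : (occPositions c S).length = occ c S := by
  have hall : ∀ p ∈ occPositions c S, p < S.length := fun p hp =>
    (List.getElem?_eq_some_iff.1 (mem_occPositions.1 hp)).1
  have hocc : occ c S = rank c S S.length := by simp [occ, rank]
  rw [hocc, rank_eq_countP_occPositions, List.countP_eq_length.2 (by simpa using hall)]

lemma rank_le_occ (c : α) (S : List α) (i : ℕ) : rank c S i ≤ occ c S :=
  (List.take_sublist i S).count_le c

lemma countP_lt_getElem_add_one_of_pairwise_lt {L : List ℕ} (hL : L.Pairwise (· < ·)) {k : ℕ}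
    (hk : k < L.length) : L.countP (fun x => decide (x < L[k] + 1)) = k + 1 := by
  induction L generalizing k with
  | nil => simp at hk
  | cons a T ih =>
    rw [List.pairwise_cons] at hL
    cases k with
    | zero => simpa using hL.1
    | succ k =>
      have hk' : k < T.length := by simpa using hk
      have hak : a < T[k] := hL.1 _ (List.getElem_mem hk')
      simp only [List.getElem_cons_succ, List.countP_cons, ih hL.2 hk']
      simp [hak.le]

lemma sel_eq_getElem_occPositions {c : α} {S : List α} {j : ℕ}
    (hj : j - 1 < (occPositions c S).length) : sel c S j = (occPositions c S)[j - 1] + 1 := by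
  rw [sel_eq_getD_occPositions, List.getD_eq_getElem _ _ hj]

lemma getElem?_sel_sub_one {c : α} {S : List α} {j : ℕ} (hj1 : 1 ≤ j) (hj2 : j ≤ occ c S) :
    S[sel c S j - 1]? = some c := by
  have hj : j - 1 < (occPositions c S).length := by rw [length_occPositions]; omega
  rw [sel_eq_getElem_occPositions hj, Nat.add_sub_cancel]
  exact mem_occPositions.1 (List.getElem_mem hj)

lemma rank_sel {c : α} {S : List α} {j : ℕ} (hj1 : 1 ≤ j) (hj2 : j ≤ occ c S) :
    rank c S (sel c S j) = j := by
  have hj : j - 1 < (occPositions c S).length := by rw [length_occPositions]; omega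
  rw [sel_eq_getElem_occPositions hj, rank_eq_countP_occPositions,
    countP_lt_getElem_add_one_of_pairwise_lt (pairwise_lt_occPositions c S) hj]
  omega

lemma sel_rank {c : α} {S : List α} {i : ℕ} (hi : 1 ≤ i) (h : S[i - 1]? = some c) :
    sel c S (rank c S i) = i := by
  obtain ⟨k, hk, hpk⟩ := List.getElem_of_mem (mem_occPositions.2 h)
  have hrank : rank c S i = k + 1 := by
    rw [rank_eq_countP_occPositions,
      ← countP_lt_getElem_add_one_of_pairwise_lt (pairwise_lt_occPositions c S) hk, hpk,
      Nat.sub_add_cancel hi]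
  rw [hrank, sel_eq_getElem_occPositions (by simpa using hk)]
  simp only [Nat.add_sub_cancel, hpk]
  omega

lemma one_le_rank {c : α} {S : List α} {i : ℕ} (hi : 1 ≤ i) (h : S[i - 1]? = some c) :
    1 ≤ rank c S i := by
  have hmem : c ∈ S.take i :=
    List.mem_of_getElem? (by rwa [List.getElem?_take_of_lt (i := i - 1) (by omega)])
  exact List.count_pos_iff.2 hmem

/-- The block of `c` in the sorted string `F` of the characters of `S`: the 1-indexed
positions `C[c] < i ≤ C[c] + occ c S`. -/
def charBlock {β : Type*} [LinearOrder β] (S : List β) (c : β) : Set ℕ :=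
  Set.Ioc (S.countP (fun y => decide (y < c))) (S.countP (fun y => decide (y < c)) + occ c S)

lemma countP_lt_add_occ {β : Type*} [LinearOrder β] (S : List β) (c : β) :
    S.countP (fun y => decide (y < c)) + occ c S = S.countP (fun y => decide (y ≤ c)) := by
  induction S with
  | nil => simp [occ]
  | cons a T ih =>
    simp only [occ, List.countP_cons, List.count_cons] at ih ⊢
    rcases lt_trichotomy a c with h | rfl | h
    · simp [h, h.ne, h.le]; omega
    · simp; omega
    · simp [h.not_gt, h.ne', h.not_ge]; omega

lemma countP_lt_add_occ_le_of_lt {β : Type*} [LinearOrder β] (S : List β) {c d : β}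
    (h : c < d) :
    S.countP (fun y => decide (y < c)) + occ c S ≤ S.countP (fun y => decide (y < d)) := by
  rw [countP_lt_add_occ]
  exact List.countP_mono_left fun y _ hy => by simpa using (of_decide_eq_true hy).trans_lt h

lemma eq_of_mem_charBlock {β : Type*} [LinearOrder β] {S : List β} {c d : β} {i : ℕ}
    (hc : i ∈ charBlock S c) (hd : i ∈ charBlock S d) : c = d := by
  by_contra hne
  rcases lt_or_gt_of_ne hne with h | h
  · have := countP_lt_add_occ_le_of_lt S h
    exact absurd (hc.2.trans this) (not_le.2 hd.1)
  · have := countP_lt_add_occ_le_of_lt S h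
    exact absurd (hd.2.trans this) (not_le.2 hc.1)

theorem psi_inverse_lf {β : Type*} [LinearOrder β] [Inhabited β] (S : List β)
    (LF : ℕ → ℕ)
    (hLF : ∀ i : ℕ, LF i =
      S.countP (fun y => decide (y < S.getD (i - 1) default)) +
        rank (S.getD (i - 1) default) S i)
    (i : ℕ) (hi1 : 1 ≤ i) (hi2 : i ≤ S.length) :
    (∀ c : β, S.countP (fun y => decide (y < c)) < i →
        i ≤ S.countP (fun y => decide (y < c)) + occ c S →
        LF (sel c S (i - S.countP (fun y => decide (y < c)))) = i) ∧
    (∀ c : β, S.countP (fun y => decide (y < c)) < LF i →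
        LF i ≤ S.countP (fun y => decide (y < c)) + occ c S →
        sel c S (LF i - S.countP (fun y => decide (y < c))) = i) := by
  constructor
  · intro c h1 h2
    have hj1 : 1 ≤ i - S.countP (fun y => decide (y < c)) := by omega
    have hj2 : i - S.countP (fun y => decide (y < c)) ≤ occ c S := by omega
    have hc : S.getD (sel c S (i - S.countP (fun y => decide (y < c))) - 1) default = c := by
      rw [List.getD_eq_getElem?_getD, getElem?_sel_sub_one hj1 hj2, Option.getD_some]
    rw [hLF, hc, rank_sel hj1 hj2]
    omega
  · intro c h1 h2
    set c₀ := S.getD (i - 1) default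
    have hc₀ : S[i - 1]? = some c₀ := by
      simp only [c₀, List.getD_eq_getElem?_getD,
        List.getElem?_eq_getElem (show i - 1 < S.length by omega), Option.getD_some]
    have hLFi : LF i = S.countP (fun y => decide (y < c₀)) + rank c₀ S i := hLF i
    have hblock : LF i ∈ charBlock S c₀ := by
      have := one_le_rank hi1 hc₀
      have := rank_le_occ c₀ S i
      constructor <;> omega
    obtain rfl : c = c₀ := eq_of_mem_charBlock ⟨h1, h2⟩ hblock
    rw [hLFi, Nat.add_sub_cancel_left]
    exact sel_rank hi1 hc₀

end RS
end
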